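/- Let f be a matching function on a finite variable set V with |V| = n. If there exists a CNF formula of size p over n variables that computes f by contradiction, then there exists a CNF formula of size O(p·n²) (i.e., of size at most C·p·n² for an absolute constant C) that computes f by propagation with some output literal. -/

import Mathlib

/-!
Basic framework: literals, clauses, CNF formulae (as multisets of clauses so that
sizes add up), partial assignments, and the stages of unit resolution.
-/

/-- A literal over variable type `V`: a variable together with a polarity
(`true` = positive literal `v`, `false` = negative literal `¬v`). -/
abbrev Lit (V : Type) := V × Bool

/-- The negation of a literal. -/
def Lit.negate {V : Type} (l : Lit V) : Lit V := (l.1, !l.2)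

/-- A clause: a finite set of literals. -/
abbrev Clause (V : Type) := Finset (Lit V)

/-- A CNF formula: a finite multiset of clauses. -/
abbrev CNF (V : Type) := Multiset (Clause V)

/-- The size of a formula: the sum of the sizes (numbers of literals) of its clauses. -/
def CNF.size {V : Type} (S : CNF V) : ℕ := (S.map Finset.card).sum

/-- A set of literals (assignment) is contradictory if some variable receives both values. -/
def Contradictory {V : Type} (U : Set (Lit V)) : Prop :=
  ∃ v : V, (v, true) ∈ U ∧ (v, false) ∈ U

/-- `c` is a unit clause with respect to `U`, with active literal `l`: `U` falsifies
all the literals of `c` except exactly the literal `l`. -/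
def IsUnitWith {V : Type} (c : Clause V) (U : Set (Lit V)) (l : Lit V) : Prop :=
  l ∈ c ∧ l.negate ∉ U ∧ ∀ r ∈ c, r ≠ l → Lit.negate r ∈ U

/-- The stages of unit resolution on `S`: `UR S 0 = ∅`, and `UR S (i+1)` extends
`UR S i` with the active literal of every clause of `S` that is unit w.r.t. `UR S i`. -/
def UR {V : Type} (S : CNF V) : ℕ → Set (Lit V)
  | 0 => ∅
  | i + 1 => UR S i ∪ { l | ∃ c ∈ S, IsUnitWith c (UR S i) l }

/-- Unit resolution on `S` produces the empty clause. -/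
def ProducesEmpty {V : Type} (S : CNF V) : Prop := ∃ i, Contradictory (UR S i)

/-- Unit resolution on `S` infers the literal `l`. -/
def Infers {V : Type} (S : CNF V) (l : Lit V) : Prop := ∃ i, l ∈ UR S i

/-- `S|_I`: the formula `S` together with a unit clause `(l)` for each literal `l ∈ I`. -/
def CNF.restrict {V : Type} (S : CNF V) (I : Multiset (Lit V)) : CNF V :=
  S + I.map (fun l => ({l} : Clause V))

/-- A finset of literals is a non-contradictory (partial) assignment. -/
def NonContra {V : Type} (I : Finset (Lit V)) : Prop :=
  ∀ v : V, ¬((v, true) ∈ I ∧ (v, false) ∈ I)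

/-- `S` computes the matching function `f`, with domain `D`, by contradiction. -/
def ComputesByContradiction {W : Type} (S : CNF W) (D : Set (Finset (Lit W)))
    (f : Finset (Lit W) → Bool) : Prop :=
  ∀ I ∈ D, (ProducesEmpty (S.restrict I.val) ↔ f I = true)

/-- `S` computes the matching function `f`, with domain `D`, by propagation with
output literal `l`. -/
def ComputesByPropagation {W : Type} (S : CNF W) (l : Lit W) (D : Set (Finset (Lit W)))
    (f : Finset (Lit W) → Bool) : Prop :=
  ∀ I ∈ D, ¬ ProducesEmpty (S.restrict I.val) ∧ (Infers (S.restrict I.val) l ↔ f I = true)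

/-- `S` (a formula over ambient variables `W`, possibly with auxiliary variables)
computes by contradiction the matching function `f` with domain `D`, a set of
partial assignments over `V`, via the variable embedding `emb : V ↪ W`. -/
def ComputesByContradictionOn {V W : Type} (emb : V ↪ W) (S : CNF W)
    (D : Set (Finset (Lit V))) (f : Finset (Lit V) → Bool) : Prop :=
  ∀ I ∈ D, (ProducesEmpty (S.restrict (I.val.map (fun l => (emb l.1, l.2)))) ↔ f I = true)

/-- `S` computes by propagation, with output literal `l`, the matching function `f`
with domain `D`, via the variable embedding `emb : V ↪ W`. -/
def ComputesByPropagationOn {V W : Type} (emb : V ↪ W) (S : CNF W) (l : Lit W)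
    (D : Set (Finset (Lit V))) (f : Finset (Lit V) → Bool) : Prop :=
  ∀ I ∈ D, ¬ ProducesEmpty (S.restrict (I.val.map (fun l => (emb l.1, l.2)))) ∧
    (Infers (S.restrict (I.val.map (fun l => (emb l.1, l.2)))) l ↔ f I = true)

set_option linter.unusedSectionVars false
set_option linter.unreachableTactic false
set_option linter.unusedTactic false
set_option linter.unusedVariables false
set_option maxHeartbeats 1000000

namespace CtoP

variable {V : Type}

theorem mem_UR_succ {S : CNF V} {i : ℕ} {l : Lit V} :
    l ∈ UR S (i+1) ↔ l ∈ UR S i ∨ ∃ c ∈ S, IsUnitWith c (UR S i) l := by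
  constructor
  · intro h; exact h
  · intro h; exact h

theorem UR_subset_succ (S : CNF V) (i : ℕ) : UR S i ⊆ UR S (i+1) := by
  intro l hl; rw [mem_UR_succ]; exact Or.inl hl

theorem UR_mono (S : CNF V) {i j : ℕ} (h : i ≤ j) : UR S i ⊆ UR S j := by
  induction j with
  | zero => simp_all
  | succ j ih =>
    rcases Nat.lt_or_ge i (j+1) with h' | h'
    · exact fun l hl => UR_subset_succ S j (ih (Nat.lt_succ_iff.mp h') hl)
    · have : i = j + 1 := le_antisymm h h'
      subst this; exact fun l hl => hl

theorem fire {S : CNF V} {c : Clause V} (hc : c ∈ S) {l : Lit V} (hl : l ∈ c) {i : ℕ}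
    (hprem : ∀ r ∈ c, r ≠ l → Lit.negate r ∈ UR S i) (hblock : l.negate ∉ UR S i) :
    l ∈ UR S (i+1) := by
  rw [mem_UR_succ]; exact Or.inr ⟨c, hc, hl, hblock, hprem⟩

theorem mem_restrict {S : CNF V} {I : Multiset (Lit V)} {c : Clause V} :
    c ∈ S.restrict I ↔ c ∈ S ∨ ∃ l ∈ I, c = ({l} : Clause V) := by
  simp [CNF.restrict, eq_comm]

/-- literal appearing in no clause of `S` is never derived -/
theorem not_mem_UR_of_not_occur {S : CNF V} {l : Lit V}
    (h : ∀ c ∈ S, l ∉ c) (i : ℕ) : l ∉ UR S i := by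
  induction i with
  | zero => simp [UR]
  | succ i ih =>
    rw [mem_UR_succ]
    rintro (hl | ⟨c, hc, hu⟩)
    · exact ih hl
    · exact h c hc hu.1

/-- a contradiction requires the two opposite facts to be born simultaneously -/
theorem both_born_eq {S : CNF V} {v : V} {i : ℕ}
    (ht : (v, true) ∈ UR S (i+1)) (hf : (v, false) ∈ UR S (i+1))
    (hnc : ¬ Contradictory (UR S i)) :
    (v, true) ∉ UR S i ∧ (v, false) ∉ UR S i ∧
    (∃ c ∈ S, IsUnitWith c (UR S i) (v, true)) ∧
    (∃ c ∈ S, IsUnitWith c (UR S i) (v, false)) := by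
  have h1 : (v, true) ∉ UR S i ∨ (v, false) ∉ UR S i := by
    by_contra h; push_neg at h; exact hnc ⟨v, h.1, h.2⟩
  rw [mem_UR_succ] at ht hf
  -- if one is in UR S i, the other was fired but its negate check fails
  have key : (v, true) ∉ UR S i ∧ (v, false) ∉ UR S i := by
    rcases h1 with h1 | h1
    · refine ⟨h1, ?_⟩
      intro h2
      rcases ht with ht | ⟨c, hc, hu⟩
      · exact h1 ht
      · exact hu.2.1 (by simpa [Lit.negate] using h2)
    · refine ⟨?_, h1⟩
      intro h2
      rcases hf with hf | ⟨c, hc, hu⟩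
      · exact h1 hf
      · exact hu.2.1 (by simpa [Lit.negate] using h2)
  rcases ht with ht | ht
  · exact absurd ht key.1
  rcases hf with hf | hf
  · exact absurd hf key.2
  exact ⟨key.1, key.2, ht, hf⟩

end CtoP

namespace CtoP
variable {V : Type}

theorem exists_first_mem {S : CNF V} {l : Lit V} {i : ℕ} (h : l ∈ UR S i) :
    ∃ j, l ∈ UR S j ∧ ∀ k < j, l ∉ UR S k := by
  classical
  have hex : ∃ j, l ∈ UR S j := ⟨i, h⟩
  refine ⟨Nat.find hex, Nat.find_spec hex, fun k hk => Nat.find_min hex hk⟩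

theorem first_pos {S : CNF V} {l : Lit V} {j : ℕ} (h : l ∈ UR S j)
    (hmin : ∀ k < j, l ∉ UR S k) : 1 ≤ j := by
  rcases Nat.eq_zero_or_pos j with rfl | h1
  · exact absurd h (by simp [UR])
  · exact h1

/-- If all clauses of `S` are empty, everything derived from `S.restrict I` is in `I`. -/
theorem UR_restrict_subset_of_empty {S : CNF V} (hS : ∀ c ∈ S, c = (∅ : Clause V))
    {I : Multiset (Lit V)} (i : ℕ) : UR (S.restrict I) i ⊆ {l | l ∈ I} := by
  induction i with
  | zero => simp [UR]
  | succ i ih =>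
    intro l hl
    rw [mem_UR_succ] at hl
    rcases hl with hl | ⟨c, hc, hu⟩
    · exact ih hl
    · rw [mem_restrict] at hc
      rcases hc with hc | ⟨m, hm, rfl⟩
      · have hce := hS c hc
        rw [hce] at hu
        exact absurd hu.1 (by simp)
      · have : l = m := by simpa using hu.1
        subst this; exact hm

end CtoP

/-- The variable type of the propagation formula. -/
inductive WV (V : Type) : Type where
  | x : V → WV V
  | pipe : V → Bool → Fin 4 → WV V
  | g : WV V
  | g2 : WV V
  | gsl : Clause V → Lit V → Bool → WV V
  | s1 : Clause V → Lit V → Lit V → WV V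
  | slot : Clause V → Lit V → Lit V → Bool → WV V
  | a1 : Clause V → Lit V → WV V
  | da : Clause V → Lit V → Bool → WV V
  | i1 : Clause V → Lit V → WV V
  | d : Lit V → WV V
  | fl : Lit V → WV V
  | y : WV V

namespace CtoP
open WV
noncomputable section
open Classical

variable {V : Type}

/-- input pipe: stage k -/
def P1 (v : V) (b : Bool) : Clause (WV V) := {(WV.x v, !b), (WV.pipe v b 0, true)}
def P2 (v : V) (b : Bool) : Clause (WV V) := {(WV.pipe v b 0, false), (WV.pipe v b 1, true)}
def P3 (v : V) (b : Bool) : Clause (WV V) := {(WV.pipe v b 1, false), (WV.pipe v b 2, true)}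
def P4 (v : V) (b : Bool) : Clause (WV V) := {(WV.pipe v b 2, false), (WV.pipe v b 3, true)}
def P5 (v : V) (b : Bool) : Clause (WV V) := {(WV.pipe v b 3, false), (WV.d (v,b), true)}
def FLX (v : V) (b : Bool) : Clause (WV V) := {(WV.x v, !b), (WV.fl (v,b), true)}
def DET (v : V) : Clause (WV V) := {(WV.fl (v,true), false), (WV.fl (v,false), false), (WV.y, true)}
def G1 : Clause (WV V) := {(WV.g, true)}
def G2c : Clause (WV V) := {(WV.g, false), (WV.g2, true)}
def GS (c : Clause V) (l : Lit V) (bb : Bool) : Clause (WV V) :=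
  {(WV.g2, false), (WV.gsl c l bb, true)}
def PR1 (c : Clause V) (l l' : Lit V) : Clause (WV V) :=
  {(WV.d l'.negate, false), (WV.s1 c l l', true)}
def PR3 (c : Clause V) (l l' : Lit V) (bb : Bool) : Clause (WV V) :=
  {(WV.s1 c l l', false), (WV.slot c l l' bb, true)}
def BA1 (c : Clause V) (l : Lit V) (bb : Bool) : Clause (WV V) :=
  {(WV.d l.negate, false), (WV.da c l bb, true)}
def BA3 (c : Clause V) (l : Lit V) : Clause (WV V) :=
  {(WV.da c l true, false), (WV.da c l false, false), (WV.a1 c l, false)}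
def I1 (c : Clause V) (l : Lit V) : Clause (WV V) := {(WV.a1 c l, false), (WV.i1 c l, true)}
def I2 (c : Clause V) (l : Lit V) : Clause (WV V) := {(WV.i1 c l, false), (WV.d l, true)}
def FLA (c : Clause V) (l : Lit V) : Clause (WV V) := {(WV.a1 c l, false), (WV.fl l, true)}
def A1C (c : Clause V) (l : Lit V) : Clause (WV V) :=
  insert (WV.a1 c l, true) (insert (WV.gsl c l true, false) (insert (WV.gsl c l false, false)
    (((c.erase l).image (fun l' => (WV.slot c l l' true, false))) ∪
     ((c.erase l).image (fun l' => (WV.slot c l l' false, false))))))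

def perCL (c : Clause V) (l : Lit V) : CNF (WV V) :=
  ({GS c l true, GS c l false, BA1 c l true, BA1 c l false, BA3 c l,
    I1 c l, I2 c l, FLA c l, A1C c l} : Multiset (Clause (WV V)))
  + (c.erase l).val.bind (fun l' =>
      ({PR1 c l l', PR3 c l l' true, PR3 c l l' false} : Multiset (Clause (WV V))))

def Sp [Fintype V] (Sc : CNF V) : CNF (WV V) :=
  ({G1, G2c} : Multiset (Clause (WV V)))
  + (Finset.univ : Finset (V × Bool)).val.bind (fun vb =>
      ({P1 vb.1 vb.2, P2 vb.1 vb.2, P3 vb.1 vb.2, P4 vb.1 vb.2, P5 vb.1 vb.2,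
        FLX vb.1 vb.2} : Multiset (Clause (WV V))))
  + (Finset.univ : Finset V).val.map (fun v => DET v)
  + Sc.bind (fun c => c.val.bind (fun l => perCL c l))

theorem mem_Sp {V : Type} [Fintype V] {Sc : CNF V} {K : Clause (WV V)} :
    K ∈ Sp Sc ↔
      (K = G1 ∨ K = G2c) ∨
      (∃ v b, K = P1 v b ∨ K = P2 v b ∨ K = P3 v b ∨ K = P4 v b ∨ K = P5 v b ∨ K = FLX v b) ∨
      (∃ v, K = DET v) ∨
      (∃ c ∈ Sc, ∃ l ∈ c,
        ((K = GS c l true ∨ K = GS c l false ∨ K = BA1 c l true ∨ K = BA1 c l false ∨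
          K = BA3 c l ∨ K = I1 c l ∨ K = I2 c l ∨ K = FLA c l ∨ K = A1C c l) ∨
         ∃ l' ∈ c.erase l, K = PR1 c l l' ∨ K = PR3 c l l' true ∨ K = PR3 c l l' false)) := by
  constructor
  · intro h
    rcases Multiset.mem_add.mp h with h | h
    swap
    · right; right; right
      rcases Multiset.mem_bind.mp h with ⟨c, hc, h⟩
      rcases Multiset.mem_bind.mp h with ⟨l, hl, h⟩
      refine ⟨c, hc, l, Finset.mem_val.mp hl, ?_⟩
      rcases Multiset.mem_add.mp h with h | h
      · left; simpa using h
      · rcases Multiset.mem_bind.mp h with ⟨l', hl', h⟩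
        exact Or.inr ⟨l', Finset.mem_val.mp hl', by simpa using h⟩
    rcases Multiset.mem_add.mp h with h | h
    swap
    · right; right; left
      rcases Multiset.mem_map.mp h with ⟨v, _, h⟩
      exact ⟨v, h.symm⟩
    rcases Multiset.mem_add.mp h with h | h
    · left; simpa using h
    · right; left
      rcases Multiset.mem_bind.mp h with ⟨vb, _, h⟩
      exact ⟨vb.1, vb.2, by simpa using h⟩
  · rintro ((h|h) | ⟨v, b, h⟩ | ⟨v, h⟩ | ⟨c, hc, l, hl, h⟩)
    · exact Multiset.mem_add.mpr (Or.inl (Multiset.mem_add.mpr (Or.inl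
        (Multiset.mem_add.mpr (Or.inl (by simp [h]))))))
    · exact Multiset.mem_add.mpr (Or.inl (Multiset.mem_add.mpr (Or.inl
        (Multiset.mem_add.mpr (Or.inl (by simp [h]))))))
    · refine Multiset.mem_add.mpr (Or.inl (Multiset.mem_add.mpr (Or.inl
        (Multiset.mem_add.mpr (Or.inr ?_)))))
      exact Multiset.mem_bind.mpr ⟨(v,b), by simp, by rcases h with h|h|h|h|h|h <;> simp [h]⟩
    · refine Multiset.mem_add.mpr (Or.inl (Multiset.mem_add.mpr (Or.inr ?_)))
      exact Multiset.mem_map.mpr ⟨v, by simp, h.symm⟩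
    · refine Multiset.mem_add.mpr (Or.inr ?_)
      refine Multiset.mem_bind.mpr ⟨c, hc, Multiset.mem_bind.mpr ⟨l, Finset.mem_val.mpr hl, ?_⟩⟩
      rcases h with h | ⟨l', hl', h⟩
      · exact Multiset.mem_add.mpr (Or.inl (by rcases h with h|h|h|h|h|h|h|h|h <;> simp [h]))
      · refine Multiset.mem_add.mpr (Or.inr (Multiset.mem_bind.mpr
          ⟨l', Finset.mem_val.mpr hl', ?_⟩))
        rcases h with h|h|h <;> simp [h]

end
end CtoP

namespace CtoP
noncomputable section
open Classical

variable {V : Type}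

-- generic IsUnitWith helpers
theorem unit_singleton {A lw : Lit V} {U : Set (Lit V)}
    (h : IsUnitWith {A} U lw) : lw = A ∧ A.negate ∉ U := by
  obtain ⟨h1, h2, _⟩ := h
  simp only [Finset.mem_singleton] at h1
  subst h1; exact ⟨rfl, h2⟩

theorem unit_singleton_mk {A : Lit V} {U : Set (Lit V)} (h : A.negate ∉ U) :
    IsUnitWith {A} U A := by
  refine ⟨by simp, h, ?_⟩
  intro r hr hne; simp only [Finset.mem_singleton] at hr; exact absurd hr hne

theorem unit_pair {A B lw : Lit V} {U : Set (Lit V)} (hAB : A ≠ B)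
    (h : IsUnitWith {A, B} U lw) :
    (lw = A ∧ A.negate ∉ U ∧ B.negate ∈ U) ∨ (lw = B ∧ B.negate ∉ U ∧ A.negate ∈ U) := by
  obtain ⟨h1, h2, h3⟩ := h
  simp only [Finset.mem_insert, Finset.mem_singleton] at h1
  rcases h1 with rfl | rfl
  · exact Or.inl ⟨rfl, h2, h3 B (by simp) (fun hh => hAB hh.symm)⟩
  · exact Or.inr ⟨rfl, h2, h3 A (by simp) hAB⟩

theorem unit_pair_mk {A B : Lit V} {U : Set (Lit V)} (hAB : A ≠ B)
    (hB : B.negate ∉ U) (hA : A.negate ∈ U) : IsUnitWith {A, B} U B := by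
  refine ⟨by simp, hB, ?_⟩
  intro r hr hne
  simp only [Finset.mem_insert, Finset.mem_singleton] at hr
  rcases hr with rfl | rfl
  · exact hA
  · exact absurd rfl hne

theorem unit_triple {A B C lw : Lit V} {U : Set (Lit V)} (hAB : A ≠ B) (hAC : A ≠ C)
    (hBC : B ≠ C) (h : IsUnitWith {A, B, C} U lw) :
    (lw = A ∧ A.negate ∉ U ∧ B.negate ∈ U ∧ C.negate ∈ U) ∨
    (lw = B ∧ B.negate ∉ U ∧ A.negate ∈ U ∧ C.negate ∈ U) ∨
    (lw = C ∧ C.negate ∉ U ∧ A.negate ∈ U ∧ B.negate ∈ U) := by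
  obtain ⟨h1, h2, h3⟩ := h
  simp only [Finset.mem_insert, Finset.mem_singleton] at h1
  rcases h1 with rfl | rfl | rfl
  · exact Or.inl ⟨rfl, h2, h3 B (by simp) (fun hh => hAB hh.symm),
      h3 C (by simp) (fun hh => hAC hh.symm)⟩
  · exact Or.inr (Or.inl ⟨rfl, h2, h3 A (by simp) hAB, h3 C (by simp) (fun hh => hBC hh.symm)⟩)
  · exact Or.inr (Or.inr ⟨rfl, h2, h3 A (by simp) hAC, h3 B (by simp) hBC⟩)

theorem unit_triple_mk {A B C : Lit V} {U : Set (Lit V)} (hAC : A ≠ C) (hBC : B ≠ C)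
    (hC : C.negate ∉ U) (hA : A.negate ∈ U) (hB : B.negate ∈ U) :
    IsUnitWith {A, B, C} U C := by
  refine ⟨by simp, hC, ?_⟩
  intro r hr hne
  simp only [Finset.mem_insert, Finset.mem_singleton] at hr
  rcases hr with rfl | rfl | rfl
  · exact hA
  · exact hB
  · exact absurd rfl hne

end
end CtoP

namespace CtoP
noncomputable section
open Classical

section Main
variable {V : Type} [Fintype V] (Sc : CNF V) (I : Finset (Lit V))

def ScR : CNF V := Sc.restrict I.val
def Xin : Multiset (Lit (WV V)) := I.val.map (fun m => (WV.x m.1, m.2))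
def SpR : CNF (WV V) := (Sp Sc).restrict (Xin I)
def U (i : ℕ) : Set (Lit V) := UR (ScR Sc I) i
def UW (t : ℕ) : Set (Lit (WV V)) := UR (SpR Sc I) t

theorem mem_SpR {K : Clause (WV V)} :
    K ∈ SpR Sc I ↔ K ∈ Sp Sc ∨ ∃ m ∈ I, K = ({(WV.x m.1, m.2)} : Clause (WV V)) := by
  rw [SpR, mem_restrict]
  constructor
  · rintro (h | ⟨lw, hlw, rfl⟩)
    · exact Or.inl h
    · rcases Multiset.mem_map.mp hlw with ⟨m, hm, rfl⟩
      exact Or.inr ⟨m, Finset.mem_val.mp hm, rfl⟩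
  · rintro (h | ⟨m, hm, rfl⟩)
    · exact Or.inl h
    · exact Or.inr ⟨(WV.x m.1, m.2), Multiset.mem_map.mpr ⟨m, Finset.mem_val.mpr hm, rfl⟩, rfl⟩

theorem U_mono {i j : ℕ} (h : i ≤ j) : U Sc I i ⊆ U Sc I j := UR_mono _ h

theorem input_mem_U1 {m : Lit V} (hm : m ∈ I) : m ∈ U Sc I 1 := by
  refine fire (S := ScR Sc I) (c := {m}) ?_ (by simp) (i := 0) ?_ ?_
  · exact mem_restrict.mpr (Or.inr ⟨m, Finset.mem_val.mpr hm, rfl⟩)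
  · intro r hr hne; simp only [Finset.mem_singleton] at hr; exact absurd hr hne
  · simp [U, UR]

def InS (c : Clause V) (l : Lit V) : Prop := c ∈ Sc ∧ l ∈ c

def PremsLe (c : Clause V) (l : Lit V) (M : ℕ) : Prop :=
  ∀ l' ∈ c.erase l, Lit.negate l' ∈ U Sc I M

def A1core (c : Clause V) (l : Lit V) (M : ℕ) : Prop :=
  PremsLe Sc I c l M ∧ Lit.negate l ∉ U Sc I M

def A1T (c : Clause V) (l : Lit V) (t : ℕ) : Prop :=
  ∃ M, A1core Sc I c l M ∧ 5*M+4 ≤ t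

def A1F (c : Clause V) (l : Lit V) (t : ℕ) : Prop :=
  ∃ j, Lit.negate l ∈ U Sc I j ∧ (∀ k < j, Lit.negate l ∉ U Sc I k) ∧
    ¬ PremsLe Sc I c l (j-1) ∧ 5*j+3 ≤ t

def FLC (m : Lit V) (t : ℕ) : Prop :=
  (m ∈ I ∧ 2 ≤ t) ∨ (∃ c, c ∈ Sc ∧ m ∈ c ∧ ∃ M, A1core Sc I c m M ∧ 5*M+5 ≤ t)

def E (t : ℕ) : Lit (WV V) → Prop
  | (WV.x v, b) => (v, b) ∈ I ∧ 1 ≤ t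
  | (WV.pipe v b k, true) => (v, b) ∈ I ∧ (k : ℕ) + 2 ≤ t
  | (WV.g, true) => 1 ≤ t
  | (WV.g2, true) => 2 ≤ t
  | (WV.gsl c l _, true) => InS Sc c l ∧ 3 ≤ t
  | (WV.s1 c l l', true) =>
      InS Sc c l ∧ l' ∈ c.erase l ∧ ∃ i, Lit.negate l' ∈ U Sc I i ∧ 5*i+2 ≤ t
  | (WV.slot c l l' _, true) =>
      InS Sc c l ∧ l' ∈ c.erase l ∧ ∃ i, Lit.negate l' ∈ U Sc I i ∧ 5*i+3 ≤ t
  | (WV.a1 c l, true) => InS Sc c l ∧ A1T Sc I c l t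
  | (WV.a1 c l, false) => InS Sc c l ∧ A1F Sc I c l t
  | (WV.da c l _, true) => InS Sc c l ∧ ∃ j, Lit.negate l ∈ U Sc I j ∧ 5*j+2 ≤ t
  | (WV.i1 c l, true) => InS Sc c l ∧ ∃ M, A1core Sc I c l M ∧ 5*M+5 ≤ t
  | (WV.d m, true) => ∃ i, m ∈ U Sc I i ∧ 5*i+1 ≤ t
  | (WV.fl m, true) => FLC Sc I m t
  | (WV.y, true) => ∃ s, s + 1 ≤ t ∧ ∃ v, FLC Sc I (v, true) s ∧ FLC Sc I (v, false) s
  | _ => False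

theorem E_zero (lw : Lit (WV V)) : ¬ E Sc I 0 lw := by
  rcases lw with ⟨w, b⟩
  rcases w <;> rcases b <;> simp [E, A1T, A1F, FLC] <;> omega

theorem E_mono {t : ℕ} {lw : Lit (WV V)} (h : E Sc I t lw) : E Sc I (t+1) lw := by
  rcases lw with ⟨w, b⟩
  rcases w <;> rcases b <;> simp only [E, A1T, A1F, FLC] at h ⊢
  case x.false => exact ⟨h.1, by omega⟩
  case x.true => exact ⟨h.1, by omega⟩
  case pipe.true => exact ⟨h.1, by omega⟩
  case g.true => omega
  case g2.true => omega
  case gsl.true => exact ⟨h.1, by omega⟩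
  case s1.true =>
    obtain ⟨h1, h2, i, hi, ht⟩ := h; exact ⟨h1, h2, i, hi, by omega⟩
  case slot.true =>
    obtain ⟨h1, h2, i, hi, ht⟩ := h; exact ⟨h1, h2, i, hi, by omega⟩
  case a1.false =>
    obtain ⟨h1, j, hj1, hj2, hj3, ht⟩ := h; exact ⟨h1, j, hj1, hj2, hj3, by omega⟩
  case a1.true =>
    obtain ⟨h1, M, hM, ht⟩ := h; exact ⟨h1, M, hM, by omega⟩
  case da.true =>
    obtain ⟨h1, j, hj, ht⟩ := h; exact ⟨h1, j, hj, by omega⟩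
  case i1.true =>
    obtain ⟨h1, M, hM, ht⟩ := h; exact ⟨h1, M, hM, by omega⟩
  case d.true =>
    obtain ⟨i, hi, ht⟩ := h; exact ⟨i, hi, by omega⟩
  case fl.true =>
    rcases h with ⟨h1, ht⟩ | ⟨c, hc, hm, M, hM, ht⟩
    · exact Or.inl ⟨h1, by omega⟩
    · exact Or.inr ⟨c, hc, hm, M, hM, by omega⟩
  case y.true =>
    obtain ⟨s, hs, hv⟩ := h; exact ⟨s, by omega, hv⟩

theorem fire_clause {c : Clause V} {l : Lit V} {M : ℕ} (hc : c ∈ Sc) (hl : l ∈ c)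
    (hp : PremsLe Sc I c l M) (hb : Lit.negate l ∉ U Sc I M) : l ∈ U Sc I (M+1) := by
  refine fire (S := ScR Sc I) (mem_restrict.mpr (Or.inl hc)) hl ?_ hb
  intro r hr hne
  exact hp r (Finset.mem_erase.mpr ⟨hne, hr⟩)

theorem A1_excl {c : Clause V} {l : Lit V} {M j : ℕ} (h : A1core Sc I c l M)
    (hj : Lit.negate l ∈ U Sc I j) (hjp : ¬ PremsLe Sc I c l (j-1)) : False := by
  have hMj : M < j := by
    by_contra h'
    push_neg at h'
    exact h.2 (U_mono Sc I h' hj)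
  exact hjp (fun l' hl' => U_mono Sc I (by omega) (h.1 l' hl'))

theorem mem_A1C {c : Clause V} {l : Lit V} {lw : Lit (WV V)} :
    lw ∈ A1C c l ↔ lw = (WV.a1 c l, true) ∨ lw = (WV.gsl c l true, false) ∨
      lw = (WV.gsl c l false, false) ∨
      ∃ l₀ ∈ c.erase l, lw = (WV.slot c l l₀ true, false) ∨ lw = (WV.slot c l l₀ false, false) := by
  simp only [A1C, Finset.mem_insert, Finset.mem_union, Finset.mem_image]
  constructor
  · rintro (h | h | h | (⟨l₀, hl₀, h⟩ | ⟨l₀, hl₀, h⟩))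
    · exact Or.inl h
    · exact Or.inr (Or.inl h)
    · exact Or.inr (Or.inr (Or.inl h))
    · exact Or.inr (Or.inr (Or.inr ⟨l₀, hl₀, Or.inl h.symm⟩))
    · exact Or.inr (Or.inr (Or.inr ⟨l₀, hl₀, Or.inr h.symm⟩))
  · rintro (h | h | h | ⟨l₀, hl₀, h | h⟩)
    · exact Or.inl h
    · exact Or.inr (Or.inl h)
    · exact Or.inr (Or.inr (Or.inl h))
    · exact Or.inr (Or.inr (Or.inr (Or.inl ⟨l₀, hl₀, h.symm⟩)))
    · exact Or.inr (Or.inr (Or.inr (Or.inr ⟨l₀, hl₀, h.symm⟩)))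

def Inv (t : ℕ) : Prop := ∀ lw : Lit (WV V), lw ∈ UW Sc I t ↔ E Sc I t lw

theorem step_forward (t : ℕ) (ih : Inv Sc I t) :
    ∀ lw : Lit (WV V), lw ∈ UW Sc I (t+1) → E Sc I (t+1) lw := by
  intro lw h
  rcases mem_UR_succ.mp h with h | ⟨K, hK, hu⟩
  · exact E_mono Sc I ((ih lw).mp h)
  rcases (mem_SpR Sc I).mp hK with hK | ⟨m, hm, rfl⟩
  swap
  · -- input unit clause
    obtain ⟨rfl, -⟩ := unit_singleton hu
    simp only [E]
    exact ⟨by simpa using hm, by omega⟩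
  rcases mem_Sp.mp hK with (rfl | rfl) | ⟨v, b, hK'⟩ | ⟨v, rfl⟩ | ⟨c, hc, l, hl, hK'⟩
  · -- G1
    obtain ⟨rfl, -⟩ := unit_singleton hu
    simp only [E]; omega
  · -- G2c
    rcases unit_pair (by simp) hu with ⟨rfl, -, hprem⟩ | ⟨rfl, -, hprem⟩
    · have := (ih _).mp hprem
      simp only [Lit.negate, Bool.not_true, E] at this
    · have := (ih _).mp hprem
      simp only [Lit.negate, Bool.not_false, E] at this
      simp only [E]; omega
  · -- pipes and FLX
    rcases hK' with rfl | rfl | rfl | rfl | rfl | rfl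
    · -- P1
      rcases unit_pair (by simp) hu with ⟨rfl, -, hprem⟩ | ⟨rfl, -, hprem⟩
      · have := (ih _).mp hprem
        simp only [Lit.negate, Bool.not_true, E] at this
      · have := (ih _).mp hprem
        simp only [Lit.negate, Bool.not_not, E] at this
        simp only [E]
        exact ⟨this.1, by simp; omega⟩
    · -- P2
      rcases unit_pair (by simp) hu with ⟨rfl, -, hprem⟩ | ⟨rfl, -, hprem⟩
      · have := (ih _).mp hprem
        simp only [Lit.negate, Bool.not_true, E] at this
      · have := (ih _).mp hprem
        simp only [Lit.negate, Bool.not_false, E] at this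
        simp only [E]
        refine ⟨this.1, ?_⟩
        have := this.2
        simp at this ⊢
        omega
    · -- P3
      rcases unit_pair (by simp) hu with ⟨rfl, -, hprem⟩ | ⟨rfl, -, hprem⟩
      · have := (ih _).mp hprem
        simp only [Lit.negate, Bool.not_true, E] at this
      · have := (ih _).mp hprem
        simp only [Lit.negate, Bool.not_false, E] at this
        simp only [E]
        refine ⟨this.1, ?_⟩
        have := this.2
        simp at this ⊢
        omega
    · -- P4
      rcases unit_pair (by simp) hu with ⟨rfl, -, hprem⟩ | ⟨rfl, -, hprem⟩
      · have := (ih _).mp hprem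
        simp only [Lit.negate, Bool.not_true, E] at this
      · have := (ih _).mp hprem
        simp only [Lit.negate, Bool.not_false, E] at this
        simp only [E]
        refine ⟨this.1, ?_⟩
        have := this.2
        simp at this ⊢
        omega
    · -- P5
      rcases unit_pair (by simp) hu with ⟨rfl, -, hprem⟩ | ⟨rfl, -, hprem⟩
      · have := (ih _).mp hprem
        simp only [Lit.negate, Bool.not_true, E] at this
      · have := (ih _).mp hprem
        simp only [Lit.negate, Bool.not_false, E] at this
        simp only [E]
        refine ⟨1, input_mem_U1 Sc I this.1, ?_⟩
        have := this.2
        simp at this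
        omega
    · -- FLX
      rcases unit_pair (by simp) hu with ⟨rfl, -, hprem⟩ | ⟨rfl, -, hprem⟩
      · have := (ih _).mp hprem
        simp only [Lit.negate, Bool.not_true, E] at this
      · have := (ih _).mp hprem
        simp only [Lit.negate, Bool.not_not, E] at this
        simp only [E, FLC]
        exact Or.inl ⟨this.1, by omega⟩
  · -- DET
    rcases unit_triple (by simp) (by simp) (by simp) hu with
      ⟨rfl, hb, hp1, hp2⟩ | ⟨rfl, hb, hp1, hp2⟩ | ⟨rfl, -, hp1, hp2⟩
    · have := (ih _).mp hp2
      simp only [Lit.negate, Bool.not_true, E] at this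
    · have := (ih _).mp hp2
      simp only [Lit.negate, Bool.not_true, E] at this
    · have h1 := (ih _).mp hp1
      have h2 := (ih _).mp hp2
      simp only [Lit.negate, Bool.not_false, E] at h1 h2
      simp only [E]
      exact ⟨t, by omega, v, h1, h2⟩
  · -- per-(c,l) clauses
    have hInS : InS Sc c l := ⟨hc, hl⟩
    rcases hK' with (rfl | rfl | rfl | rfl | rfl | rfl | rfl | rfl | rfl) | ⟨l', hl', hK'⟩
    · -- GS true
      rcases unit_pair (by simp) hu with ⟨rfl, -, hprem⟩ | ⟨rfl, -, hprem⟩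
      · have := (ih _).mp hprem
        simp only [Lit.negate, Bool.not_true, E] at this
      · have := (ih _).mp hprem
        simp only [Lit.negate, Bool.not_false, E] at this
        simp only [E]
        exact ⟨hInS, by omega⟩
    · -- GS false
      rcases unit_pair (by simp) hu with ⟨rfl, -, hprem⟩ | ⟨rfl, -, hprem⟩
      · have := (ih _).mp hprem
        simp only [Lit.negate, Bool.not_true, E] at this
      · have := (ih _).mp hprem
        simp only [Lit.negate, Bool.not_false, E] at this
        simp only [E]
        exact ⟨hInS, by omega⟩
    · -- BA1 true
      rcases unit_pair (by simp) hu with ⟨rfl, -, hprem⟩ | ⟨rfl, -, hprem⟩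
      · have := (ih _).mp hprem
        simp only [Lit.negate, Bool.not_true, E] at this
      · have := (ih _).mp hprem
        simp only [Lit.negate, Bool.not_false, E] at this
        obtain ⟨j, hj, hjt⟩ := this
        simp only [E]
        exact ⟨hInS, j, hj, by omega⟩
    · -- BA1 false
      rcases unit_pair (by simp) hu with ⟨rfl, -, hprem⟩ | ⟨rfl, -, hprem⟩
      · have := (ih _).mp hprem
        simp only [Lit.negate, Bool.not_true, E] at this
      · have := (ih _).mp hprem
        simp only [Lit.negate, Bool.not_false, E] at this
        obtain ⟨j, hj, hjt⟩ := this
        simp only [E]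
        exact ⟨hInS, j, hj, by omega⟩
    · -- BA3
      rcases unit_triple (by simp) (by simp) (by simp) hu with
        ⟨rfl, hb, hp1, hp2⟩ | ⟨rfl, hb, hp1, hp2⟩ | ⟨rfl, hb, hp1, hp2⟩
      · simp only [Lit.negate, Bool.not_false] at hb hp1
        have h2 := (ih _).mp hp1
        simp only [E] at h2
        exact absurd ((ih (WV.da c l true, true)).mpr (by simp only [E]; exact h2)) hb
      · simp only [Lit.negate, Bool.not_false] at hb hp1
        have h2 := (ih _).mp hp1
        simp only [E] at h2
        exact absurd ((ih (WV.da c l false, true)).mpr (by simp only [E]; exact h2)) hb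
      · -- lw = (a1 c l, false)
        simp only [Lit.negate, Bool.not_false] at hb hp1 hp2
        have h1 := (ih _).mp hp1
        simp only [E] at h1
        obtain ⟨-, j', hj', hj't⟩ := h1
        obtain ⟨j, hjmem, hjmin⟩ := exists_first_mem hj'
        have hj1 : 1 ≤ j := first_pos hjmem hjmin
        have hjle : j ≤ j' := by
          by_contra hcon
          push_neg at hcon
          exact hjmin j' hcon hj'
        simp only [E, A1F]
        refine ⟨hInS, j, hjmem, hjmin, ?_, by omega⟩
        intro hP
        have hA1T : E Sc I t (WV.a1 c l, true) := by
          simp only [E, A1T, A1core]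
          exact ⟨hInS, j-1, ⟨hP, hjmin (j-1) (by omega)⟩, by omega⟩
        exact hb ((ih _).mpr hA1T)
    · -- I1
      rcases unit_pair (by simp) hu with ⟨rfl, -, hprem⟩ | ⟨rfl, -, hprem⟩
      · have := (ih _).mp hprem
        simp only [Lit.negate, Bool.not_true, E] at this
      · have := (ih _).mp hprem
        simp only [Lit.negate, Bool.not_false, E, A1T] at this
        obtain ⟨-, M, hM, hMt⟩ := this
        simp only [E]
        exact ⟨hInS, M, hM, by omega⟩
    · -- I2
      rcases unit_pair (by simp) hu with ⟨rfl, -, hprem⟩ | ⟨rfl, -, hprem⟩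
      · have := (ih _).mp hprem
        simp only [Lit.negate, Bool.not_true, E] at this
      · have := (ih _).mp hprem
        simp only [Lit.negate, Bool.not_false, E] at this
        obtain ⟨-, M, hM, hMt⟩ := this
        simp only [E]
        exact ⟨M+1, fire_clause Sc I hc hl hM.1 hM.2, by omega⟩
    · -- FLA
      rcases unit_pair (by simp) hu with ⟨rfl, -, hprem⟩ | ⟨rfl, -, hprem⟩
      · have := (ih _).mp hprem
        simp only [Lit.negate, Bool.not_true, E] at this
      · have := (ih _).mp hprem
        simp only [Lit.negate, Bool.not_false, E] at this
        obtain ⟨-, M, hM, hMt⟩ := this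
        simp only [E, FLC]
        exact Or.inr ⟨c, hc, hl, M, hM, by omega⟩
    · -- A1C
      obtain ⟨hmem, hblock, hall⟩ := hu
      rcases mem_A1C.mp hmem with rfl | rfl | rfl | ⟨l₀, hl₀, rfl | rfl⟩
      · -- lw = (a1 c l, true)
        simp only [Lit.negate, Bool.not_true] at hblock
        have hg : (WV.gsl c l true, true) ∈ UW Sc I t := by
          have := hall (WV.gsl c l true, false)
            (mem_A1C.mpr (Or.inr (Or.inl rfl))) (by simp)
          simpa [Lit.negate, UW] using this
        have hg' := (ih _).mp hg
        simp only [E] at hg'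
        have ht3 : 3 ≤ t := hg'.2
        have hM3 : 5 * ((t - 3) / 5) + 3 ≤ t := by omega
        have hprem : PremsLe Sc I c l ((t - 3) / 5) := by
          intro l₁ hl₁
          have hs : (WV.slot c l l₁ true, true) ∈ UW Sc I t := by
            have := hall (WV.slot c l l₁ true, false)
              (mem_A1C.mpr (Or.inr (Or.inr (Or.inr ⟨l₁, hl₁, Or.inl rfl⟩)))) (by simp)
            simpa [Lit.negate, UW] using this
          have hs' := (ih _).mp hs
          simp only [E] at hs'
          obtain ⟨-, -, i, hi, hit⟩ := hs'
          exact U_mono Sc I (by omega) hi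
        by_cases hneg : Lit.negate l ∈ U Sc I ((t - 3) / 5)
        · obtain ⟨j, hjmem, hjmin⟩ := exists_first_mem hneg
          have hj1 : 1 ≤ j := first_pos hjmem hjmin
          have hjle : j ≤ (t - 3) / 5 := by
            by_contra hcon
            push_neg at hcon
            exact hjmin _ hcon hneg
          by_cases hPj : PremsLe Sc I c l (j-1)
          · refine E_mono Sc I ?_
            simp only [E, A1T, A1core]
            exact ⟨hInS, j-1, ⟨hPj, hjmin (j-1) (by omega)⟩, by omega⟩
          · exact absurd ((ih _).mpr (by
              simp only [E, A1F]
              exact ⟨hInS, j, hjmem, hjmin, hPj, by omega⟩)) hblock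
        · simp only [E, A1T, A1core]
          exact ⟨hInS, (t - 3) / 5, ⟨hprem, hneg⟩, by omega⟩
      · -- lw = (gsl c l true, false)
        exfalso
        simp only [Lit.negate, Bool.not_false] at hblock
        have hg : (WV.gsl c l false, true) ∈ UW Sc I t := by
          have := hall (WV.gsl c l false, false)
            (mem_A1C.mpr (Or.inr (Or.inr (Or.inl rfl)))) (by simp)
          simpa [Lit.negate, UW] using this
        have hg' := (ih _).mp hg
        simp only [E] at hg'
        exact hblock ((ih _).mpr (by simp only [E]; exact hg'))
      · -- lw = (gsl c l false, false)
        exfalso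
        simp only [Lit.negate, Bool.not_false] at hblock
        have hg : (WV.gsl c l true, true) ∈ UW Sc I t := by
          have := hall (WV.gsl c l true, false)
            (mem_A1C.mpr (Or.inr (Or.inl rfl))) (by simp)
          simpa [Lit.negate, UW] using this
        have hg' := (ih _).mp hg
        simp only [E] at hg'
        exact hblock ((ih _).mpr (by simp only [E]; exact hg'))
      · -- lw = (slot c l l₀ true, false)
        exfalso
        simp only [Lit.negate, Bool.not_false] at hblock
        have hs : (WV.slot c l l₀ false, true) ∈ UW Sc I t := by
          have := hall (WV.slot c l l₀ false, false)
            (mem_A1C.mpr (Or.inr (Or.inr (Or.inr ⟨l₀, hl₀, Or.inr rfl⟩)))) (by simp)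
          simpa [Lit.negate, UW] using this
        have hs' := (ih _).mp hs
        simp only [E] at hs'
        exact hblock ((ih _).mpr (by simp only [E]; exact hs'))
      · -- lw = (slot c l l₀ false, false)
        exfalso
        simp only [Lit.negate, Bool.not_false] at hblock
        have hs : (WV.slot c l l₀ true, true) ∈ UW Sc I t := by
          have := hall (WV.slot c l l₀ true, false)
            (mem_A1C.mpr (Or.inr (Or.inr (Or.inr ⟨l₀, hl₀, Or.inl rfl⟩)))) (by simp)
          simpa [Lit.negate, UW] using this
        have hs' := (ih _).mp hs
        simp only [E] at hs'
        exact hblock ((ih _).mpr (by simp only [E]; exact hs'))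
    · -- PR clauses
      rcases hK' with rfl | rfl | rfl
      · -- PR1
        rcases unit_pair (by simp) hu with ⟨rfl, -, hprem⟩ | ⟨rfl, -, hprem⟩
        · have := (ih _).mp hprem
          simp only [Lit.negate, Bool.not_true, E] at this
        · have := (ih _).mp hprem
          simp only [Lit.negate, Bool.not_false, E] at this
          obtain ⟨i, hi, hit⟩ := this
          simp only [E]
          exact ⟨hInS, hl', i, hi, by omega⟩
      · -- PR3 true
        rcases unit_pair (by simp) hu with ⟨rfl, -, hprem⟩ | ⟨rfl, -, hprem⟩
        · have := (ih _).mp hprem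
          simp only [Lit.negate, Bool.not_true, E] at this
        · have := (ih _).mp hprem
          simp only [Lit.negate, Bool.not_false, E] at this
          obtain ⟨-, -, i, hi, hit⟩ := this
          simp only [E]
          exact ⟨hInS, hl', i, hi, by omega⟩
      · -- PR3 false
        rcases unit_pair (by simp) hu with ⟨rfl, -, hprem⟩ | ⟨rfl, -, hprem⟩
        · have := (ih _).mp hprem
          simp only [Lit.negate, Bool.not_true, E] at this
        · have := (ih _).mp hprem
          simp only [Lit.negate, Bool.not_false, E] at this
          obtain ⟨-, -, i, hi, hit⟩ := this
          simp only [E]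
          exact ⟨hInS, hl', i, hi, by omega⟩

theorem notinW_of_Efalse {t : ℕ} (ih : Inv Sc I t) {lw : Lit (WV V)}
    (h : ¬ E Sc I t lw) : lw ∉ UW Sc I t := fun hc => h ((ih lw).mp hc)

theorem step_backward (t : ℕ) (ih : Inv Sc I t) :
    ∀ lw : Lit (WV V), E Sc I (t+1) lw → lw ∈ UW Sc I (t+1) := by
  intro lw hE
  by_cases hold : E Sc I t lw
  · exact UR_subset_succ _ _ ((ih lw).mpr hold)
  rcases lw with ⟨w, bb⟩
  rcases w with v | ⟨v, b, k⟩ | _ | _ | ⟨c, l, gb⟩ | ⟨c, l, l'⟩ | ⟨c, l, l', sb⟩ |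
    ⟨c, l⟩ | ⟨c, l, db⟩ | ⟨c, l⟩ | m | m | _
  · -- x
    simp only [E] at hE hold
    have ht : t = 0 := by
      rcases hE with ⟨h1, -⟩
      by_contra hcon
      exact hold ⟨h1, by omega⟩
    subst ht
    refine fire (S := SpR Sc I) (c := {(WV.x v, bb)})
      ((mem_SpR Sc I).mpr (Or.inr ⟨(v, bb), hE.1, rfl⟩)) (by simp) ?_ ?_
    · intro r hr hne
      simp only [Finset.mem_singleton] at hr
      exact absurd hr hne
    · simp [UW, UR]
  · -- pipe
    rcases bb with _ | _
    · simp only [E] at hE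
    simp only [E] at hE hold
    obtain ⟨hvb, hkt⟩ := hE
    have ht : t = (k : ℕ) + 1 := by
      by_contra hcon
      exact hold ⟨hvb, by omega⟩
    rcases k with ⟨kk, hkk⟩
    interval_cases kk
    · refine fire (S := SpR Sc I) (c := P1 v b)
        ((mem_SpR Sc I).mpr (Or.inl (mem_Sp.mpr (Or.inr (Or.inl ⟨v, b, Or.inl rfl⟩))))) ?_ ?_ ?_
      · simp [P1]
      · intro r hr hne
        simp only [P1, Finset.mem_insert, Finset.mem_singleton] at hr
        rcases hr with rfl | rfl
        · refine (ih _).mpr ?_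
          simp only [Lit.negate, Bool.not_not, E]
          exact ⟨hvb, by simp at ht; omega⟩
        · exact absurd rfl hne
      · exact notinW_of_Efalse Sc I ih (by simp [Lit.negate, E])
    · refine fire (S := SpR Sc I) (c := P2 v b)
        ((mem_SpR Sc I).mpr (Or.inl (mem_Sp.mpr (Or.inr (Or.inl ⟨v, b, Or.inr (Or.inl rfl)⟩))))) ?_ ?_ ?_
      · simp [P2]
      · intro r hr hne
        simp only [P2, Finset.mem_insert, Finset.mem_singleton] at hr
        rcases hr with rfl | rfl
        · refine (ih _).mpr ?_
          simp only [Lit.negate, Bool.not_false, E]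
          exact ⟨hvb, by simp at ht ⊢; omega⟩
        · exact absurd rfl hne
      · exact notinW_of_Efalse Sc I ih (by simp [Lit.negate, E])
    · refine fire (S := SpR Sc I) (c := P3 v b)
        ((mem_SpR Sc I).mpr (Or.inl (mem_Sp.mpr (Or.inr (Or.inl ⟨v, b, Or.inr (Or.inr (Or.inl rfl))⟩))))) ?_ ?_ ?_
      · simp [P3]
      · intro r hr hne
        simp only [P3, Finset.mem_insert, Finset.mem_singleton] at hr
        rcases hr with rfl | rfl
        · refine (ih _).mpr ?_
          simp only [Lit.negate, Bool.not_false, E]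
          exact ⟨hvb, by simp at ht ⊢; omega⟩
        · exact absurd rfl hne
      · exact notinW_of_Efalse Sc I ih (by simp [Lit.negate, E])
    · refine fire (S := SpR Sc I) (c := P4 v b)
        ((mem_SpR Sc I).mpr (Or.inl (mem_Sp.mpr (Or.inr (Or.inl ⟨v, b, Or.inr (Or.inr (Or.inr (Or.inl rfl)))⟩))))) ?_ ?_ ?_
      · simp [P4]
      · intro r hr hne
        simp only [P4, Finset.mem_insert, Finset.mem_singleton] at hr
        rcases hr with rfl | rfl
        · refine (ih _).mpr ?_
          simp only [Lit.negate, Bool.not_false, E]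
          exact ⟨hvb, by simp at ht ⊢; omega⟩
        · exact absurd rfl hne
      · exact notinW_of_Efalse Sc I ih (by simp [Lit.negate, E])
  · -- g
    rcases bb with _ | _
    · simp only [E] at hE
    simp only [E] at hE hold
    have ht : t = 0 := by omega
    subst ht
    refine fire (S := SpR Sc I) (c := G1)
      ((mem_SpR Sc I).mpr (Or.inl (mem_Sp.mpr (Or.inl (Or.inl rfl))))) (by simp [G1]) ?_ ?_
    · intro r hr hne
      simp only [G1, Finset.mem_singleton] at hr
      exact absurd hr hne
    · simp [UW, UR]
  · -- g2
    rcases bb with _ | _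
    · simp only [E] at hE
    simp only [E] at hE hold
    refine fire (S := SpR Sc I) (c := G2c)
      ((mem_SpR Sc I).mpr (Or.inl (mem_Sp.mpr (Or.inl (Or.inr rfl))))) (by simp [G2c]) ?_ ?_
    · intro r hr hne
      simp only [G2c, Finset.mem_insert, Finset.mem_singleton] at hr
      rcases hr with rfl | rfl
      · refine (ih _).mpr ?_
        simp only [Lit.negate, Bool.not_false, E]
        omega
      · exact absurd rfl hne
    · exact notinW_of_Efalse Sc I ih (by simp [Lit.negate, E])
  · -- gsl
    rcases bb with _ | _
    · simp only [E] at hE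
    simp only [E] at hE hold
    obtain ⟨hInS, ht3⟩ := hE
    refine fire (S := SpR Sc I) (c := GS c l gb)
      ((mem_SpR Sc I).mpr (Or.inl (mem_Sp.mpr (Or.inr (Or.inr (Or.inr
        ⟨c, hInS.1, l, hInS.2, Or.inl (by rcases gb with _|_ <;> simp)⟩)))))) (by simp [GS]) ?_ ?_
    · intro r hr hne
      simp only [GS, Finset.mem_insert, Finset.mem_singleton] at hr
      rcases hr with rfl | rfl
      · refine (ih _).mpr ?_
        simp only [Lit.negate, Bool.not_false, E]
        have : 3 ≤ t + 1 := ht3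
        have ht : ¬ (3 ≤ t) := fun hcon => hold ⟨hInS, hcon⟩
        omega
      · exact absurd rfl hne
    · exact notinW_of_Efalse Sc I ih (by simp [Lit.negate, E])
  · -- s1
    rcases bb with _ | _
    · simp only [E] at hE
    simp only [E] at hE
    obtain ⟨hInS, hl', i, hi, hit⟩ := hE
    refine fire (S := SpR Sc I) (c := PR1 c l l')
      ((mem_SpR Sc I).mpr (Or.inl (mem_Sp.mpr (Or.inr (Or.inr (Or.inr
        ⟨c, hInS.1, l, hInS.2, Or.inr ⟨l', hl', Or.inl rfl⟩⟩)))))) (by simp [PR1]) ?_ ?_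
    · intro r hr hne
      simp only [PR1, Finset.mem_insert, Finset.mem_singleton] at hr
      rcases hr with rfl | rfl
      · refine (ih _).mpr ?_
        simp only [Lit.negate, Bool.not_false, E]
        exact ⟨i, hi, by omega⟩
      · exact absurd rfl hne
    · exact notinW_of_Efalse Sc I ih (by simp [Lit.negate, E])
  · -- slot
    rcases bb with _ | _
    · simp only [E] at hE
    simp only [E] at hE
    obtain ⟨hInS, hl', i, hi, hit⟩ := hE
    refine fire (S := SpR Sc I) (c := PR3 c l l' sb)
      ((mem_SpR Sc I).mpr (Or.inl (mem_Sp.mpr (Or.inr (Or.inr (Or.inr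
        ⟨c, hInS.1, l, hInS.2, Or.inr ⟨l', hl',
          by rcases sb with _|_ <;> simp⟩⟩)))))) (by simp [PR3]) ?_ ?_
    · intro r hr hne
      simp only [PR3, Finset.mem_insert, Finset.mem_singleton] at hr
      rcases hr with rfl | rfl
      · refine (ih _).mpr ?_
        simp only [Lit.negate, Bool.not_false, E]
        exact ⟨hInS, hl', i, hi, by omega⟩
      · exact absurd rfl hne
    · exact notinW_of_Efalse Sc I ih (by simp [Lit.negate, E])
  · -- a1
    rcases bb with _ | _
    · -- a1 false : fire BA3
      simp only [E, A1F] at hE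
      obtain ⟨hInS, j, hj, hjmin, hnp, hjt⟩ := hE
      refine fire (S := SpR Sc I) (c := BA3 c l)
        ((mem_SpR Sc I).mpr (Or.inl (mem_Sp.mpr (Or.inr (Or.inr (Or.inr
          ⟨c, hInS.1, l, hInS.2, Or.inl (by simp)⟩)))))) (by simp [BA3]) ?_ ?_
      · intro r hr hne
        simp only [BA3, Finset.mem_insert, Finset.mem_singleton] at hr
        rcases hr with rfl | rfl | rfl
        · refine (ih _).mpr ?_
          simp only [Lit.negate, Bool.not_false, E]
          exact ⟨hInS, j, hj, by omega⟩
        · refine (ih _).mpr ?_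
          simp only [Lit.negate, Bool.not_false, E]
          exact ⟨hInS, j, hj, by omega⟩
        · exact absurd rfl hne
      · refine notinW_of_Efalse Sc I ih ?_
        simp only [Lit.negate, Bool.not_false, E, A1T]
        rintro ⟨-, M, hcore, -⟩
        exact A1_excl Sc I hcore hj hnp
    · -- a1 true : fire A1C
      simp only [E, A1T] at hE
      obtain ⟨hInS, M, hcore, hMt⟩ := hE
      refine fire (S := SpR Sc I) (c := A1C c l)
        ((mem_SpR Sc I).mpr (Or.inl (mem_Sp.mpr (Or.inr (Or.inr (Or.inr
          ⟨c, hInS.1, l, hInS.2, Or.inl (by simp)⟩))))))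
        (mem_A1C.mpr (Or.inl rfl)) ?_ ?_
      · intro r hr hne
        rcases mem_A1C.mp hr with rfl | rfl | rfl | ⟨l₀, hl₀, rfl | rfl⟩
        · exact absurd rfl hne
        · refine (ih _).mpr ?_
          simp only [Lit.negate, Bool.not_false, E]
          exact ⟨hInS, by omega⟩
        · refine (ih _).mpr ?_
          simp only [Lit.negate, Bool.not_false, E]
          exact ⟨hInS, by omega⟩
        · refine (ih _).mpr ?_
          simp only [Lit.negate, Bool.not_false, E]
          exact ⟨hInS, hl₀, M, hcore.1 l₀ hl₀, by omega⟩
        · refine (ih _).mpr ?_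
          simp only [Lit.negate, Bool.not_false, E]
          exact ⟨hInS, hl₀, M, hcore.1 l₀ hl₀, by omega⟩
      · refine notinW_of_Efalse Sc I ih ?_
        simp only [Lit.negate, Bool.not_true, E, A1F]
        rintro ⟨-, j, hj, hjmin, hnp, -⟩
        exact A1_excl Sc I hcore hj hnp
  · -- da
    rcases bb with _ | _
    · simp only [E] at hE
    simp only [E] at hE
    obtain ⟨hInS, j, hj, hjt⟩ := hE
    refine fire (S := SpR Sc I) (c := BA1 c l db)
      ((mem_SpR Sc I).mpr (Or.inl (mem_Sp.mpr (Or.inr (Or.inr (Or.inr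
        ⟨c, hInS.1, l, hInS.2, Or.inl (by rcases db with _|_ <;> simp)⟩))))))
      (by simp [BA1]) ?_ ?_
    · intro r hr hne
      simp only [BA1, Finset.mem_insert, Finset.mem_singleton] at hr
      rcases hr with rfl | rfl
      · refine (ih _).mpr ?_
        simp only [Lit.negate, Bool.not_false, E]
        exact ⟨j, hj, by omega⟩
      · exact absurd rfl hne
    · exact notinW_of_Efalse Sc I ih (by simp [Lit.negate, E])
  · -- i1
    rcases bb with _ | _
    · simp only [E] at hE
    simp only [E] at hE
    obtain ⟨hInS, M, hcore, hMt⟩ := hE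
    refine fire (S := SpR Sc I) (c := I1 c l)
      ((mem_SpR Sc I).mpr (Or.inl (mem_Sp.mpr (Or.inr (Or.inr (Or.inr
        ⟨c, hInS.1, l, hInS.2, Or.inl (by simp)⟩))))))
      (by simp [I1]) ?_ ?_
    · intro r hr hne
      simp only [I1, Finset.mem_insert, Finset.mem_singleton] at hr
      rcases hr with rfl | rfl
      · refine (ih _).mpr ?_
        simp only [Lit.negate, Bool.not_false, E, A1T]
        exact ⟨hInS, M, hcore, by omega⟩
      · exact absurd rfl hne
    · exact notinW_of_Efalse Sc I ih (by simp [Lit.negate, E])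
  · -- d
    rcases bb with _ | _
    · simp only [E] at hE
    simp only [E] at hE hold
    obtain ⟨i, hi, hit⟩ := hE
    obtain ⟨j, hjmem, hjmin⟩ := exists_first_mem hi
    have hj1 : 1 ≤ j := first_pos hjmem hjmin
    have hjle : j ≤ i := by
      by_contra hcon
      push_neg at hcon
      exact hjmin i hcon hi
    have ht : t = 5 * j := by
      have h1 : ¬ (5 * j + 1 ≤ t) := fun hcon => hold ⟨j, hjmem, hcon⟩
      omega
    have hjmem' : m ∈ UR (ScR Sc I) ((j-1)+1) := by
      have : (j-1)+1 = j := by omega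
      rw [this]
      exact hjmem
    rcases mem_UR_succ.mp hjmem' with hmem | ⟨K, hKSc, huK⟩
    · exact absurd hmem (hjmin (j-1) (by omega))
    rcases mem_restrict.mp hKSc with hcSc | ⟨m', hm', rfl⟩
    · -- real clause of Sc
      obtain ⟨hmc, hnneg, hall⟩ := huK
      refine fire (S := SpR Sc I) (c := I2 K m)
        ((mem_SpR Sc I).mpr (Or.inl (mem_Sp.mpr (Or.inr (Or.inr (Or.inr
          ⟨K, hcSc, m, hmc, Or.inl (by simp)⟩))))))
        (by simp [I2]) ?_ ?_
      · intro r hr hne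
        simp only [I2, Finset.mem_insert, Finset.mem_singleton] at hr
        rcases hr with rfl | rfl
        · refine (ih _).mpr ?_
          simp only [Lit.negate, Bool.not_false, E]
          refine ⟨⟨hcSc, hmc⟩, j-1, ⟨?_, hnneg⟩, by omega⟩
          intro l₁ hl₁
          rw [Finset.mem_erase] at hl₁
          exact hall l₁ hl₁.2 hl₁.1
        · exact absurd rfl hne
      · exact notinW_of_Efalse Sc I ih (by simp [Lit.negate, E])
    · -- input unit
      have hmm : m = m' := by simpa using huK.1
      subst hmm
      have hmI : m ∈ I := hm'
      have hj1' : j = 1 := by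
        have := input_mem_U1 Sc I hmI
        by_contra hcon
        exact hjmin 1 (by omega) this
      subst hj1'
      refine fire (S := SpR Sc I) (c := P5 m.1 m.2)
        ((mem_SpR Sc I).mpr (Or.inl (mem_Sp.mpr (Or.inr (Or.inl
          ⟨m.1, m.2, Or.inr (Or.inr (Or.inr (Or.inr (Or.inl rfl))))⟩)))))
        (by simp [P5]) ?_ ?_
      · intro r hr hne
        simp only [P5, Finset.mem_insert, Finset.mem_singleton] at hr
        rcases hr with rfl | rfl
        · refine (ih _).mpr ?_
          simp only [Lit.negate, Bool.not_false, E]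
          constructor
          · exact hmI
          · have h34 : ((3 : Fin 4) : ℕ) = 3 := rfl
            omega
        · exact absurd rfl hne
      · exact notinW_of_Efalse Sc I ih (by simp [Lit.negate, E])
  · -- fl
    rcases bb with _ | _
    · simp only [E] at hE
    simp only [E, FLC] at hE hold
    rcases hE with ⟨hmI, h2t⟩ | ⟨c, hc, hmc, M, hcore, hMt⟩
    · have ht : t = 1 := by
        have : ¬ (2 ≤ t) := fun hcon => hold (Or.inl ⟨hmI, hcon⟩)
        omega
      subst ht
      refine fire (S := SpR Sc I) (c := FLX m.1 m.2)
        ((mem_SpR Sc I).mpr (Or.inl (mem_Sp.mpr (Or.inr (Or.inl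
          ⟨m.1, m.2, Or.inr (Or.inr (Or.inr (Or.inr (Or.inr rfl))))⟩)))))
        (by simp [FLX]) ?_ ?_
      · intro r hr hne
        simp only [FLX, Finset.mem_insert, Finset.mem_singleton] at hr
        rcases hr with rfl | rfl
        · refine (ih _).mpr ?_
          simp only [Lit.negate, Bool.not_not, E]
          exact ⟨hmI, by omega⟩
        · exact absurd rfl hne
      · exact notinW_of_Efalse Sc I ih (by simp [Lit.negate, E])
    · refine fire (S := SpR Sc I) (c := FLA c m)
        ((mem_SpR Sc I).mpr (Or.inl (mem_Sp.mpr (Or.inr (Or.inr (Or.inr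
          ⟨c, hc, m, hmc, Or.inl (by simp)⟩))))))
        (by simp [FLA]) ?_ ?_
      · intro r hr hne
        simp only [FLA, Finset.mem_insert, Finset.mem_singleton] at hr
        rcases hr with rfl | rfl
        · refine (ih _).mpr ?_
          simp only [Lit.negate, Bool.not_false, E, A1T]
          exact ⟨⟨hc, hmc⟩, M, hcore, by omega⟩
        · exact absurd rfl hne
      · exact notinW_of_Efalse Sc I ih (by simp [Lit.negate, E])
  · -- y
    rcases bb with _ | _
    · simp only [E] at hE
    simp only [E] at hE hold
    obtain ⟨s, hst, v, h1, h2⟩ := hE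
    have hs : s = t := by
      by_contra hcon
      exact hold ⟨s, by omega, v, h1, h2⟩
    subst hs
    refine fire (S := SpR Sc I) (c := DET v)
      ((mem_SpR Sc I).mpr (Or.inl (mem_Sp.mpr (Or.inr (Or.inr (Or.inl ⟨v, rfl⟩))))))
      (by simp [DET]) ?_ ?_
    · intro r hr hne
      simp only [DET, Finset.mem_insert, Finset.mem_singleton] at hr
      rcases hr with rfl | rfl | rfl
      · refine (ih _).mpr ?_
        simp only [Lit.negate, Bool.not_false, E]
        exact h1
      · refine (ih _).mpr ?_
        simp only [Lit.negate, Bool.not_false, E]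
        exact h2
      · exact absurd rfl hne
    · exact notinW_of_Efalse Sc I ih (by simp [Lit.negate, E])


theorem master : ∀ t, Inv Sc I t := by
  intro t
  induction t with
  | zero =>
    intro lw
    constructor
    · intro h
      exact absurd h (by simp [UW, UR])
    · intro h
      exact absurd h (E_zero Sc I lw)
  | succ t ih => exact fun lw => ⟨step_forward Sc I t ih lw, step_backward Sc I t ih lw⟩

theorem UW_noncontra (hI : NonContra I) (t : ℕ) : ¬ Contradictory (UW Sc I t) := by
  rintro ⟨w, h1, h0⟩
  have e1 := (master Sc I t _).mp h1
  have e0 := (master Sc I t _).mp h0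
  rcases w with v | ⟨v, b, k⟩ | _ | _ | ⟨c, l, gb⟩ | ⟨c, l, l'⟩ | ⟨c, l, l', sb⟩ |
    ⟨c, l⟩ | ⟨c, l, db⟩ | ⟨c, l⟩ | m | m | _
  · simp only [E] at e1 e0
    exact hI v ⟨e1.1, e0.1⟩
  · simp only [E] at e0
  · simp only [E] at e0
  · simp only [E] at e0
  · simp only [E] at e0
  · simp only [E] at e0
  · simp only [E] at e0
  · simp only [E, A1T, A1F] at e1 e0
    obtain ⟨-, M, hcore, -⟩ := e1
    obtain ⟨-, j, hj, hjmin, hnp, -⟩ := e0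
    exact A1_excl Sc I hcore hj hnp
  · simp only [E] at e0
  · simp only [E] at e0
  · simp only [E] at e0
  · simp only [E] at e0
  · simp only [E] at e0

theorem not_PE_SpR (hI : NonContra I) : ¬ ProducesEmpty (SpR Sc I) := by
  rintro ⟨t, hcon⟩
  exact UW_noncontra Sc I hI t hcon

theorem FLC_mem {m : Lit V} {s : ℕ} (h : FLC Sc I m s) : ∃ i, m ∈ U Sc I i := by
  rcases h with ⟨hmI, -⟩ | ⟨c, hc, hmc, M, hcore, -⟩
  · exact ⟨1, input_mem_U1 Sc I hmI⟩
  · exact ⟨M+1, fire_clause Sc I hc hmc hcore.1 hcore.2⟩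

theorem fired_to_FLC {m : Lit V} {i : ℕ}
    (h : ∃ K ∈ ScR Sc I, IsUnitWith K (U Sc I i) m) : FLC Sc I m (5*i+5) := by
  obtain ⟨K, hK, hu⟩ := h
  rcases mem_restrict.mp hK with hcSc | ⟨m', hm', rfl⟩
  · obtain ⟨hmc, hneg, hall⟩ := hu
    refine Or.inr ⟨K, hcSc, hmc, i, ⟨?_, hneg⟩, by omega⟩
    intro l₁ hl₁
    rw [Finset.mem_erase] at hl₁
    exact hall l₁ hl₁.2 hl₁.1
  · have : m = m' := by simpa using hu.1
    subst this
    exact Or.inl ⟨hm', by omega⟩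

theorem infers_iff (hI : NonContra I) :
    Infers (SpR Sc I) (WV.y, true) ↔ ProducesEmpty (ScR Sc I) := by
  constructor
  · rintro ⟨t, hy⟩
    have hEy := (master Sc I t _).mp hy
    simp only [E] at hEy
    obtain ⟨s, -, v, h1, h2⟩ := hEy
    obtain ⟨i1, hm1⟩ := FLC_mem Sc I h1
    obtain ⟨i2, hm2⟩ := FLC_mem Sc I h2
    refine ⟨max i1 i2, v, ?_, ?_⟩
    · exact U_mono Sc I (le_max_left _ _) hm1
    · exact U_mono Sc I (le_max_right _ _) hm2
  · intro hPE
    classical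
    have hex : ∃ i, Contradictory (U Sc I i) := hPE
    set i0 := Nat.find hex with hi0
    have hspec : Contradictory (U Sc I i0) := Nat.find_spec hex
    have hpos : 1 ≤ i0 := by
      rcases Nat.eq_zero_or_pos i0 with h | h
      · rw [h] at hspec
        obtain ⟨v, hv, -⟩ := hspec
        exact absurd hv (by simp [U, UR])
      · exact h
    have hnc : ¬ Contradictory (U Sc I (i0 - 1)) := Nat.find_min hex (by omega)
    obtain ⟨v, hvt, hvf⟩ := hspec
    have hmem : (v, true) ∈ UR (ScR Sc I) ((i0-1)+1) ∧ (v, false) ∈ UR (ScR Sc I) ((i0-1)+1) := by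
      have : (i0-1)+1 = i0 := by omega
      rw [this]
      exact ⟨hvt, hvf⟩
    obtain ⟨-, -, hf1, hf2⟩ := both_born_eq hmem.1 hmem.2 hnc
    have flc1 : FLC Sc I (v, true) (5*(i0-1)+5) := fired_to_FLC Sc I hf1
    have flc2 : FLC Sc I (v, false) (5*(i0-1)+5) := fired_to_FLC Sc I hf2
    refine ⟨5*(i0-1)+5+1, ?_⟩
    refine (master Sc I (5*(i0-1)+5+1) _).mpr ?_
    simp only [E]
    exact ⟨5*(i0-1)+5, le_refl _, v, flc1, flc2⟩


theorem size_add (A B : CNF (WV V)) : (A + B).size = A.size + B.size := by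
  simp [CNF.size]

theorem card_pair_le {α : Type*} [DecidableEq α] (a b : α) : ({a, b} : Finset α).card ≤ 2 := by
  apply le_trans (Finset.card_insert_le _ _)
  simp

theorem card_triple_le {α : Type*} [DecidableEq α] (a b c : α) :
    ({a, b, c} : Finset α).card ≤ 3 := by
  apply le_trans (Finset.card_insert_le _ _)
  have := card_pair_le b c
  omega

theorem card_A1C_le (c : Clause V) (l : Lit V) : (A1C c l).card ≤ 2 * c.card + 3 := by
  have h0 : (((c.erase l).image (fun l' => ((WV.slot c l l' true : WV V), false))) ∪
     ((c.erase l).image (fun l' => ((WV.slot c l l' false : WV V), false)))).card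
      ≤ 2 * c.card := by
    apply le_trans (Finset.card_union_le _ _)
    have h1 := Finset.card_image_le (s := c.erase l)
      (f := fun l' => ((WV.slot c l l' true : WV V), false))
    have h2 := Finset.card_image_le (s := c.erase l)
      (f := fun l' => ((WV.slot c l l' false : WV V), false))
    have h3 := Finset.card_erase_le (a := l) (s := c)
    omega
  unfold A1C
  have i1 := Finset.card_insert_le ((WV.a1 c l : WV V), true)
    (insert ((WV.gsl c l true : WV V), false) (insert ((WV.gsl c l false : WV V), false)
    (((c.erase l).image (fun l' => ((WV.slot c l l' true : WV V), false))) ∪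
     ((c.erase l).image (fun l' => ((WV.slot c l l' false : WV V), false))))))
  have i2 := Finset.card_insert_le ((WV.gsl c l true : WV V), false)
    (insert ((WV.gsl c l false : WV V), false)
    (((c.erase l).image (fun l' => ((WV.slot c l l' true : WV V), false))) ∪
     ((c.erase l).image (fun l' => ((WV.slot c l l' false : WV V), false)))))
  have i3 := Finset.card_insert_le ((WV.gsl c l false : WV V), false)
    (((c.erase l).image (fun l' => ((WV.slot c l l' true : WV V), false))) ∪
     ((c.erase l).image (fun l' => ((WV.slot c l l' false : WV V), false))))
  omega

theorem size_bind {α : Type} (S : Multiset α) (f : α → CNF (WV V)) :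
    CNF.size (S.bind f) = (S.map (fun a => CNF.size (f a))).sum := by
  simp [CNF.size, Multiset.map_bind, Multiset.sum_bind]

theorem size_perCL (c : Clause V) (l : Lit V) :
    (perCL c l).size ≤ 8 * c.card + 20 := by
  rw [perCL, size_add]
  have h1 : CNF.size ({GS c l true, GS c l false, BA1 c l true, BA1 c l false, BA3 c l,
      I1 c l, I2 c l, FLA c l, A1C c l} : Multiset (Clause (WV V)))
      ≤ 17 + (2 * c.card + 3) := by
    simp only [CNF.size, Multiset.insert_eq_cons, Multiset.map_cons, Multiset.sum_cons,
      Multiset.map_singleton, Multiset.sum_singleton]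
    have g1 := card_pair_le ((WV.g2 : WV V), false) ((WV.gsl c l true : WV V), true)
    have g2 := card_pair_le ((WV.g2 : WV V), false) ((WV.gsl c l false : WV V), true)
    have g3 := card_pair_le ((WV.d l.negate : WV V), false) ((WV.da c l true : WV V), true)
    have g4 := card_pair_le ((WV.d l.negate : WV V), false) ((WV.da c l false : WV V), true)
    have g5 := card_triple_le ((WV.da c l true : WV V), false) ((WV.da c l false : WV V), false)
      ((WV.a1 c l : WV V), false)
    have g6 := card_pair_le ((WV.a1 c l : WV V), false) ((WV.i1 c l : WV V), true)
    have g7 := card_pair_le ((WV.i1 c l : WV V), false) ((WV.d l : WV V), true)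
    have g8 := card_pair_le ((WV.a1 c l : WV V), false) ((WV.fl l : WV V), true)
    have g9 := card_A1C_le c l
    simp only [GS, BA1, BA3, I1, I2, FLA] at *
    omega
  have h2 : CNF.size ((c.erase l).val.bind (fun l' =>
      ({PR1 c l l', PR3 c l l' true, PR3 c l l' false} : Multiset (Clause (WV V)))))
      ≤ 6 * c.card := by
    rw [size_bind]
    have hb : ∀ x ∈ (c.erase l).val.map (fun l' =>
        CNF.size ({PR1 c l l', PR3 c l l' true, PR3 c l l' false} : Multiset (Clause (WV V)))),
        x ≤ 6 := by
      intro x hx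
      rcases Multiset.mem_map.mp hx with ⟨l', hl', rfl⟩
      simp only [CNF.size, Multiset.insert_eq_cons, Multiset.map_cons, Multiset.sum_cons,
        Multiset.map_singleton, Multiset.sum_singleton]
      have g1 := card_pair_le ((WV.d l'.negate : WV V), false) ((WV.s1 c l l' : WV V), true)
      have g2 := card_pair_le ((WV.s1 c l l' : WV V), false) ((WV.slot c l l' true : WV V), true)
      have g3 := card_pair_le ((WV.s1 c l l' : WV V), false) ((WV.slot c l l' false : WV V), true)
      simp only [PR1, PR3] at *
      omega
    calc ((c.erase l).val.map _).sum
        ≤ (Multiset.card ((c.erase l).val.map _)) • 6 := Multiset.sum_le_card_nsmul _ _ hb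
      _ = (c.erase l).card * 6 := by rw [Multiset.card_map, smul_eq_mul]; rfl
      _ ≤ 6 * c.card := by
          have := Finset.card_erase_le (a := l) (s := c)
          omega
  omega

theorem size_Sp_le (Sc : CNF V) (hn : 1 ≤ Fintype.card V) (hp : 1 ≤ Sc.size) :
    (Sp Sc).size ≤ 100 * Sc.size * (Fintype.card V)^2 := by
  set n := Fintype.card V with hn'
  have hcard : ∀ c ∈ Sc, c.card ≤ 2 * n := by
    intro c _
    calc c.card ≤ (Finset.univ : Finset (Lit V)).card := Finset.card_le_univ c
      _ = Fintype.card (Lit V) := rfl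
      _ = 2 * n := by simp [Fintype.card_prod, Fintype.card_bool]; ring
  rw [Sp]
  rw [size_add, size_add, size_add]
  have h1 : CNF.size ({G1, G2c} : Multiset (Clause (WV V))) ≤ 3 := by
    simp only [CNF.size, Multiset.insert_eq_cons, Multiset.map_cons, Multiset.sum_cons,
      Multiset.map_singleton, Multiset.sum_singleton]
    have g1 : (G1 : Clause (WV V)).card ≤ 1 := by simp [G1]
    have g2 : (G2c : Clause (WV V)).card ≤ 2 := by
      rw [G2c]
      exact card_pair_le _ _
    omega
  have h2 : CNF.size ((Finset.univ : Finset (V × Bool)).val.bind (fun vb =>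
      ({P1 vb.1 vb.2, P2 vb.1 vb.2, P3 vb.1 vb.2, P4 vb.1 vb.2, P5 vb.1 vb.2,
        FLX vb.1 vb.2} : Multiset (Clause (WV V))))) ≤ 24 * n := by
    rw [size_bind]
    have hb : ∀ x ∈ (Finset.univ : Finset (V × Bool)).val.map (fun vb =>
        CNF.size ({P1 vb.1 vb.2, P2 vb.1 vb.2, P3 vb.1 vb.2, P4 vb.1 vb.2, P5 vb.1 vb.2,
          FLX vb.1 vb.2} : Multiset (Clause (WV V)))), x ≤ 12 := by
      intro x hx
      rcases Multiset.mem_map.mp hx with ⟨⟨v, b⟩, hvb, rfl⟩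
      simp only [CNF.size, Multiset.insert_eq_cons, Multiset.map_cons, Multiset.sum_cons,
        Multiset.map_singleton, Multiset.sum_singleton]
      have g1 := card_pair_le ((WV.x v : WV V), !b) ((WV.pipe v b 0 : WV V), true)
      have g2 := card_pair_le ((WV.pipe v b 0 : WV V), false) ((WV.pipe v b 1 : WV V), true)
      have g3 := card_pair_le ((WV.pipe v b 1 : WV V), false) ((WV.pipe v b 2 : WV V), true)
      have g4 := card_pair_le ((WV.pipe v b 2 : WV V), false) ((WV.pipe v b 3 : WV V), true)
      have g5 := card_pair_le ((WV.pipe v b 3 : WV V), false) ((WV.d (v,b) : WV V), true)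
      have g6 := card_pair_le ((WV.x v : WV V), !b) ((WV.fl (v,b) : WV V), true)
      simp only [P1, P2, P3, P4, P5, FLX] at *
      omega
    calc _ ≤ (Multiset.card ((Finset.univ : Finset (V × Bool)).val.map _)) • 12 :=
          Multiset.sum_le_card_nsmul _ _ hb
      _ ≤ 24 * n := by
          rw [Multiset.card_map, smul_eq_mul]
          have hcv : Multiset.card (Finset.univ : Finset (V × Bool)).val
              = Fintype.card (V × Bool) := rfl
          rw [hcv, Fintype.card_prod, Fintype.card_bool, ← hn']
          omega
  have h3 : CNF.size ((Finset.univ : Finset V).val.map (fun v => DET v)) ≤ 3 * n := by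
    simp only [CNF.size, Multiset.map_map]
    have hb : ∀ x ∈ (Finset.univ : Finset V).val.map (fun v => (DET v).card), x ≤ 3 := by
      intro x hx
      rcases Multiset.mem_map.mp hx with ⟨v, hv, rfl⟩
      exact card_triple_le _ _ _
    calc _ ≤ (Multiset.card ((Finset.univ : Finset V).val.map (fun v => (DET v).card))) • 3 :=
          Multiset.sum_le_card_nsmul _ _ hb
      _ ≤ 3 * n := by
          rw [Multiset.card_map, smul_eq_mul]
          have hcv : Multiset.card (Finset.univ : Finset V).val = Fintype.card V := rfl
          rw [hcv, ← hn']
          omega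
  have h4 : CNF.size (Sc.bind (fun c => c.val.bind (fun l => perCL c l)))
      ≤ (16 * n + 20) * Sc.size := by
    rw [size_bind]
    have hb : ∀ c ∈ Sc, CNF.size (c.val.bind (fun l => perCL c l)) ≤ (16 * n + 20) * c.card := by
      intro c hc
      rw [size_bind]
      have hbb : ∀ x ∈ c.val.map (fun l => (perCL c l).size), x ≤ 16 * n + 20 := by
        intro x hx
        rcases Multiset.mem_map.mp hx with ⟨l, hl, rfl⟩
        have := size_perCL c l
        have := hcard c hc
        omega
      calc _ ≤ (Multiset.card (c.val.map (fun l => (perCL c l).size))) • (16 * n + 20) :=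
            Multiset.sum_le_card_nsmul _ _ hbb
        _ = c.card * (16 * n + 20) := by rw [Multiset.card_map, smul_eq_mul]; rfl
        _ = (16 * n + 20) * c.card := by ring
    calc (Sc.map (fun c => CNF.size (c.val.bind (fun l => perCL c l)))).sum
        ≤ (Sc.map (fun c => (16 * n + 20) * c.card)).sum := by
          apply Multiset.sum_map_le_sum_map
          intro c hc
          exact hb c hc
      _ = (16 * n + 20) * Sc.size := by
          rw [CNF.size, ← Multiset.sum_map_mul_left]
  have hA : n ≤ n * n := Nat.le_mul_of_pos_left n (by omega)
  have hfin : 3 + 24 * n + 3 * n + (16 * n + 20) * Sc.size ≤ 100 * Sc.size * n^2 := by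
    have k1 : (16 * n + 20) * Sc.size ≤ 36 * n * Sc.size := Nat.mul_le_mul_right _ (by omega)
    have k2 : 36 * n * Sc.size ≤ 36 * (n * n) * Sc.size :=
      Nat.mul_le_mul_right _ (Nat.mul_le_mul_left 36 hA)
    have k3 : 3 + 24 * n + 3 * n ≤ 30 * n := by omega
    have k4 : 30 * n ≤ 30 * (n * n) := Nat.mul_le_mul_left 30 hA
    have k5 : 30 * (n * n) ≤ 30 * (n * n) * Sc.size := Nat.le_mul_of_pos_right _ (by omega)
    have k6 : 30 * (n * n) * Sc.size + 36 * (n * n) * Sc.size ≤ 100 * Sc.size * n ^ 2 := by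
      have hsq : n ^ 2 = n * n := pow_two n
      rw [hsq]
      have e1 : 30 * (n*n) * Sc.size + 36 * (n*n) * Sc.size = 66 * ((n*n) * Sc.size) := by ring
      rw [e1]
      have e2 : 100 * Sc.size * (n*n) = 100 * ((n*n) * Sc.size) := by ring
      rw [e2]
      exact Nat.mul_le_mul_right _ (by omega)
    omega
  omega


end Main
end
end CtoP


/-- There is an absolute constant `C` such that for every matching
function `f` on a finite variable set `V` with `|V| = n`: if there exists a CNF
formula of size `p` over the `n` variables of `V` that computes `f` by contradiction,
then there exists a CNF formula (over some extended variable set) of size at most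
`C * p * n ^ 2` that computes `f` by propagation with some output literal. -/
theorem contradiction_to_propagation_polysize :
    ∃ C : ℕ, ∀ (V : Type) [Fintype V] (D : Set (Finset (Lit V)))
      (f : Finset (Lit V) → Bool), (∀ I ∈ D, NonContra I) →
      ∀ (p : ℕ) (Sc : CNF V), Sc.size = p →
        ComputesByContradictionOn (Function.Embedding.refl V) Sc D f →
        ∃ (W : Type) (emb : V ↪ W) (Sp : CNF W) (l : Lit W),
          Sp.size ≤ C * p * (Fintype.card V) ^ 2 ∧
          ComputesByPropagationOn emb Sp l D f := by
  classical
  refine ⟨100, ?_⟩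
  intro V _ D f hD p Sc hsize hcomp
  have hmap : ∀ I : Finset (Lit V),
      I.val.map (fun l => ((Function.Embedding.refl V) l.1, l.2)) = I.val := by
    intro I
    simp
  have hembinj : Function.Injective (WV.x : V → WV V) := fun a b h => by cases h; rfl
  by_cases hp : p = 0
  · -- trivial case: Sc has only empty clauses, f is constantly false
    have hS0 : ∀ c ∈ Sc, c = (∅ : Clause V) := by
      intro c hc
      have hz : (Sc.map Finset.card).sum = 0 := by rw [← CNF.size, hsize, hp]
      have hc0 : c.card = 0 := by
        by_contra hne
        have hmem : c.card ∈ Sc.map Finset.card := Multiset.mem_map.mpr ⟨c, hc, rfl⟩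
        have := Multiset.sum_eq_zero_iff.mp hz _ hmem
        exact hne this
      exact Finset.card_eq_zero.mp hc0
    refine ⟨WV V, ⟨WV.x, hembinj⟩, 0, ((WV.y : WV V), true), by simp [CNF.size, hp], ?_⟩
    intro I hID
    have hI := hD I hID
    have hsub := CtoP.UR_restrict_subset_of_empty (S := (0 : CNF (WV V)))
      (by intro c hc; exact absurd hc (by simp))
      (I := I.val.map (fun l => ((⟨WV.x, hembinj⟩ : V ↪ WV V) l.1, l.2)))
    constructor
    · rintro ⟨i, w, h1, h0⟩
      have g1 := hsub i h1
      have g0 := hsub i h0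
      simp only [Set.mem_setOf_eq, Multiset.mem_map] at g1 g0
      obtain ⟨m1, hm1, he1⟩ := g1
      obtain ⟨m0, hm0, he0⟩ := g0
      have hx1 : (WV.x m1.1, m1.2) = (w, true) := he1
      have hx0 : (WV.x m0.1, m0.2) = (w, false) := he0
      have hv : m1.1 = m0.1 := by
        have h1' : WV.x m1.1 = w := congrArg Prod.fst hx1
        have h0' : WV.x m0.1 = w := congrArg Prod.fst hx0
        have hxx := h1'.trans h0'.symm
        exact WV.x.injEq m1.1 m0.1 ▸ hxx
      have hb1 : m1.2 = true := congrArg Prod.snd hx1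
      have hb0 : m0.2 = false := congrArg Prod.snd hx0
      apply hI m0.1
      constructor
      · have : m1 = (m0.1, true) := by
          rw [← hv, ← hb1]
        rw [← this]
        exact Finset.mem_val.mp hm1
      · have : m0 = (m0.1, false) := by
          rw [← hb0]
        rw [← this]
        exact Finset.mem_val.mp hm0
    · have hL : ¬ Infers ((0 : CNF (WV V)).restrict
          (I.val.map (fun l => ((⟨WV.x, hembinj⟩ : V ↪ WV V) l.1, l.2)))) ((WV.y : WV V), true) := by
        rintro ⟨i, hy⟩
        have := hsub i hy
        simp only [Set.mem_setOf_eq, Multiset.mem_map] at this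
        obtain ⟨m, hm, he⟩ := this
        have : WV.x m.1 = WV.y := congrArg Prod.fst he
        exact absurd this (by simp)
      have hR : ¬ ProducesEmpty (Sc.restrict I.val) := by
        rintro ⟨i, v, h1, h0⟩
        have hsubV := CtoP.UR_restrict_subset_of_empty hS0 (I := I.val) i
        exact hI v ⟨Finset.mem_val.mp (hsubV h1), Finset.mem_val.mp (hsubV h0)⟩
      have h2 := hcomp I hID
      rw [hmap I] at h2
      constructor
      · intro h
        exact absurd h hL
      · intro h
        exact absurd (h2.mpr h) hR
  · -- main case
    have hp1 : 1 ≤ Sc.size := by omega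
    have hn : 1 ≤ Fintype.card V := by
      by_contra h
      have h0 : Fintype.card V = 0 := by omega
      have hS0 : ∀ c ∈ Sc, c = (∅ : Clause V) := by
        intro c hc
        rw [Finset.eq_empty_iff_forall_notMem]
        rintro ⟨v, b⟩ _
        exact absurd (Fintype.card_pos_iff.mpr ⟨v⟩) (by omega)
      have : Sc.size = 0 := by
        rw [CNF.size]
        apply Multiset.sum_eq_zero
        intro x hx
        rcases Multiset.mem_map.mp hx with ⟨c, hc, rfl⟩
        rw [hS0 c hc]
        simp
      omega
    refine ⟨WV V, ⟨WV.x, hembinj⟩, CtoP.Sp Sc, ((WV.y : WV V), true), ?_, ?_⟩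
    · rw [← hsize]
      exact CtoP.size_Sp_le Sc hn hp1
    · intro I hID
      have hI := hD I hID
      constructor
      · exact CtoP.not_PE_SpR Sc I hI
      · have h1 := CtoP.infers_iff Sc I hI
        have h2 := hcomp I hID
        rw [hmap I] at h2
        exact h1.trans h2
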